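/- Let d ≥ 2 and m ≥ 2 be integers and g ≥ 0, L ≥ 0 real numbers, and consider the MBSP instance given by the zipper DAG Z(d,m) with P = 2 processors and cache capacity r = d+2. Every valid schedule in which every COMPUTE transition of a node v_i (i ∈ [m]) occurs on processor 1 contains at least (m−1)·(d−1) LOAD transitions on processor 1; consequently, the synchronous cost of every such schedule is at least (m−1)·(d−1)·g. -/

import Mathlib

namespace MBSP

/-- A transition (pebbling move) of a single processor. -/
inductive Op (ν : Type) where
  | load : ν → Op ν
  | save : ν → Op ν
  | compute : ν → Op ν
  | delete : ν → Op ν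
deriving DecidableEq

/-- An MBSP instance: a DAG with compute weights `ω`, memory weights `μ`,
`P` processors, cache capacity `r`, communication cost `g` and synchronization cost `L`. -/
structure Inst (ν : Type) where
  edge : ν → ν → Prop
  ω : ν → ℝ
  μ : ν → ℝ
  P : ℕ
  r : ℝ
  g : ℝ
  L : ℝ

variable {ν : Type} [DecidableEq ν]

def isSource (I : Inst ν) (v : ν) : Prop := ¬ ∃ u, I.edge u v

def isSink (I : Inst ν) (v : ν) : Prop := ¬ ∃ u, I.edge v u

def Acyclic (I : Inst ν) : Prop := ∀ v, ¬ Relation.TransGen I.edge v v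

def opCost (I : Inst ν) : Op ν → ℝ
  | .load v => I.μ v * I.g
  | .save v => I.μ v * I.g
  | .compute v => I.ω v
  | .delete _ => 0

def applyOp (R B : Finset ν) : Op ν → Finset ν × Finset ν
  | .load v => (insert v R, B)
  | .save v => (R, insert v B)
  | .compute v => (insert v R, B)
  | .delete v => (R.erase v, B)

def opOK (I : Inst ν) (R B : Finset ν) : Op ν → Prop
  | .load v => v ∈ B
  | .save v => v ∈ R
  | .compute v => (∃ u, I.edge u v) ∧ ∀ u, I.edge u v → u ∈ R
  | .delete _ => True

/-- The memory bound for a cache content `R`. -/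
def memOK (I : Inst ν) (R : Finset ν) : Prop := ∑ v ∈ R, I.μ v ≤ I.r

/-- Run a sequence of transitions of one processor on a pair (cache, slow memory). -/
def run (R B : Finset ν) : List (Op ν) → Finset ν × Finset ν
  | [] => (R, B)
  | op :: rest => run (applyOp R B op).1 (applyOp R B op).2 rest

/-- Validity of a sequence of transitions of one processor: every precondition holds
when the transition is applied and the memory bound holds throughout. -/
def seqValid (I : Inst ν) (R B : Finset ν) : List (Op ν) → Prop
  | [] => True
  | op :: rest => opOK I R B op ∧ memOK I (applyOp R B op).1 ∧
      seqValid I (applyOp R B op).1 (applyOp R B op).2 rest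

/-- A superstep: for every processor, a compute phase (computes and deletes),
then a save phase, a delete phase and a load phase. -/
structure Superstep (ν : Type) (P : ℕ) where
  comp : Fin P → List (Op ν)
  save : Fin P → List ν
  del : Fin P → List ν
  load : Fin P → List ν

structure Config (ν : Type) (P : ℕ) where
  R : Fin P → Finset ν
  B : Finset ν

abbrev Schedule (ν : Type) (P : ℕ) := List (Superstep ν P)

variable {P : ℕ}

def compOnly (l : List (Op ν)) : Prop :=
  ∀ op ∈ l, (∃ v, op = Op.compute v) ∨ (∃ v, op = Op.delete v)

def afterComp (c : Config ν P) (S : Superstep ν P) (p : Fin P) : Finset ν :=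
  (run (c.R p) c.B (S.comp p)).1

/-- The shared slow memory after the save phases of all processors. -/
def newB (c : Config ν P) (S : Superstep ν P) : Finset ν :=
  c.B ∪ Finset.univ.biUnion (fun p => (S.save p).toFinset)

def afterDel (c : Config ν P) (S : Superstep ν P) (p : Fin P) : Finset ν :=
  (S.del p).foldl Finset.erase (afterComp c S p)

def afterLoad (c : Config ν P) (S : Superstep ν P) (p : Fin P) : Finset ν :=
  afterDel c S p ∪ (S.load p).toFinset

/-- The configuration reached after executing a superstep. -/
def stepConfig (c : Config ν P) (S : Superstep ν P) : Config ν P :=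
  ⟨fun p => afterLoad c S p, newB c S⟩

/-- Validity of a superstep at a configuration. -/
def ssValid (I : Inst ν) (c : Config ν I.P) (S : Superstep ν I.P) : Prop :=
  (∀ p, compOnly (S.comp p)) ∧
  (∀ p, seqValid I (c.R p) c.B (S.comp p)) ∧
  (∀ p, ∀ v ∈ S.save p, v ∈ afterComp c S p) ∧
  (∀ p, ∀ v ∈ S.load p, v ∈ newB c S) ∧
  (∀ p, memOK I (afterLoad c S p))

def runSched (c : Config ν P) : Schedule ν P → Config ν P
  | [] => c
  | S :: rest => runSched (stepConfig c S) rest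

def schedValidFrom (I : Inst ν) (c : Config ν I.P) : Schedule ν I.P → Prop
  | [] => True
  | S :: rest => ssValid I c S ∧ schedValidFrom I (stepConfig c S) rest

/-- `B` is exactly the set of sources of the DAG. -/
def initB (I : Inst ν) (B : Finset ν) : Prop := ∀ v, v ∈ B ↔ isSource I v

/-- A valid MBSP schedule: starts with empty caches and the sources in slow memory,
every transition is legal and the memory bound holds throughout, and at the end
every sink is in slow memory. -/
def Valid (I : Inst ν) (sched : Schedule ν I.P) : Prop :=
  ∃ B0 : Finset ν, initB I B0 ∧
    schedValidFrom I ⟨fun _ => ∅, B0⟩ sched ∧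
    ∀ v, isSink I v → v ∈ (runSched (⟨fun _ => ∅, B0⟩ : Config ν I.P) sched).B

def listCost (I : Inst ν) (l : List (Op ν)) : ℝ := (l.map (opCost I)).sum

def ioCost (I : Inst ν) (l : List ν) : ℝ := (l.map (fun v => I.μ v * I.g)).sum

/-- The synchronous cost of a superstep. -/
noncomputable def ssCost (I : Inst ν) (S : Superstep ν I.P) : ℝ :=
  (⨆ p : Fin I.P, listCost I (S.comp p)) + (⨆ p : Fin I.P, ioCost I (S.save p)) +
    (⨆ p : Fin I.P, ioCost I (S.load p)) + I.L

/-- The synchronous cost of a schedule. -/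
noncomputable def syncCost (I : Inst ν) (sched : Schedule ν I.P) : ℝ :=
  (sched.map (ssCost I)).sum

/-- Finishing times of the saves in a save phase starting at time `t`. -/
def saveFinishes (I : Inst ν) : ℝ → List ν → List (ν × ℝ)
  | _, [] => []
  | t, v :: rest => (v, t + I.μ v * I.g) :: saveFinishes I (t + I.μ v * I.g) rest

def minSaveTime (entries : List (ν × ℝ)) (v : ν) : Option ℝ :=
  ((entries.filter (fun e => e.1 == v)).map Prod.snd).min?

/-- Finishing time of a load phase: each load waits for the value to be available
in slow memory (time `Γ v`). -/
def loadFold (I : Inst ν) (Γ : ν → Option ℝ) : ℝ → List ν → ℝ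
  | t, [] => t
  | t, v :: rest => loadFold I Γ (max t ((Γ v).getD 0) + I.μ v * I.g) rest

/-- One superstep of the asynchronous execution: updates the finishing time of
every processor and the availability times `Γ` of the values in slow memory. -/
def asyncSS (I : Inst ν) (S : Superstep ν I.P)
    (st : (Fin I.P → ℝ) × (ν → Option ℝ)) : (Fin I.P → ℝ) × (ν → Option ℝ) :=
  let t1 : Fin I.P → ℝ := fun p => st.1 p + listCost I (S.comp p)
  let entries : List (ν × ℝ) :=
    ((List.finRange I.P).map (fun p => saveFinishes I (t1 p) (S.save p))).flatten
  let Γ' : ν → Option ℝ := fun v => (st.2 v).orElse (fun _ => minSaveTime entries v)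
  let t2 : Fin I.P → ℝ := fun p => t1 p + ioCost I (S.save p)
  (fun p => loadFold I Γ' (t2 p) (S.load p), Γ')

def asyncRun (I : Inst ν) (st : (Fin I.P → ℝ) × (ν → Option ℝ)) :
    Schedule ν I.P → (Fin I.P → ℝ) × (ν → Option ℝ)
  | [] => st
  | S :: rest => asyncRun I (asyncSS I S st) rest

/-- The asynchronous cost (makespan) of a schedule. -/
noncomputable def asyncCost (I : Inst ν) (sched : Schedule ν I.P) : ℝ :=
  ⨆ p : Fin I.P, (asyncRun I (fun _ => (0 : ℝ), fun _ => none) sched).1 p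

end MBSP

namespace MBSP

/-- Nodes of the zipper DAG `Z(d,m)`: two groups `H₁`, `H₂` of `d` source nodes
each, and two chains `v_1,…,v_m` and `u_1,…,u_m` (index `i ∈ [m]` is `Fin`-value `i-1`). -/
inductive ZNode (d m : ℕ) where
  | h1 : Fin d → ZNode d m
  | h2 : Fin d → ZNode d m
  | v : Fin m → ZNode d m
  | u : Fin m → ZNode d m
deriving DecidableEq, Fintype

/-- Edges of the zipper DAG `Z(d,m)`. -/
def zEdge (d m : ℕ) : ZNode d m → ZNode d m → Prop
  | .v i, .v j => (j : ℕ) = (i : ℕ) + 1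
  | .u i, .u j => (j : ℕ) = (i : ℕ) + 1
  | .h1 _, .u i => Odd ((i : ℕ) + 1)
  | .h1 _, .v i => Even ((i : ℕ) + 1)
  | .h2 _, .v i => Odd ((i : ℕ) + 1)
  | .h2 _, .u i => Even ((i : ℕ) + 1)
  | _, _ => False

/-- The MBSP instance on the zipper DAG `Z(d,m)` with `P = 2` processors, cache
capacity `r`, communication cost `g` and synchronization cost `L`; all compute and
memory weights are `1`. -/
def zipper (d m : ℕ) (r g L : ℝ) : Inst (ZNode d m) where
  edge := zEdge d m
  ω := fun _ => 1
  μ := fun _ => 1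
  P := 2
  r := r
  g := g
  L := L

end MBSP

/-!
Let `K` be the largest index of a chain node `v_K` held anywhere (in a cache or in slow memory).
To compute `v_{K+1}`, processor 1 must hold all `d` nodes of the half of `H₁ ∪ H₂` feeding
`v_{K+1}`, together with `v_K` and `v_{K+1}`; with `r = d + 2` at most one node of the other half,
which feeds `v_{K+2}`, fits beside them. Hence
`Φ = (d - 1)(K - 1) + #(R₁ ∩ parents of v_{K+1})`, with `R₁` the cache of processor 1, never
increases under computations and deletions, grows by at most one per load of processor 1, starts
at `0` and ends at least at `(d - 1)(m - 1)`, since `v_m` is a sink. Processor 2 cannot raise `K`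
because it computes no `v_i`.
-/

namespace MBSP

open Finset

section General

variable {ν : Type} [DecidableEq ν] {P : ℕ}

def Config.held (c : Config ν P) : Finset ν :=
  c.B ∪ univ.biUnion c.R

lemma Config.mem_held {c : Config ν P} {x : ν} :
    x ∈ c.held ↔ x ∈ c.B ∨ ∃ p, x ∈ c.R p := by
  simp [Config.held]

lemma foldl_erase_subset (l : List ν) (s : Finset ν) : l.foldl Finset.erase s ⊆ s := by
  induction l generalizing s with
  | nil => exact subset_rfl
  | cons a l ih => exact (ih _).trans (erase_subset a s)

lemma mem_run_of_compOnly {l : List (Op ν)} (hl : compOnly l) {R B : Finset ν} {x : ν}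
    (hx : x ∈ (run R B l).1) : x ∈ R ∨ Op.compute x ∈ l := by
  induction l generalizing R B with
  | nil => exact Or.inl hx
  | cons op rest ih =>
    simp only [run] at hx
    rcases ih (fun o ho => hl o (List.mem_cons_of_mem _ ho)) hx with h | h
    · rcases hl op List.mem_cons_self with ⟨w, rfl⟩ | ⟨w, rfl⟩
      · rcases mem_insert.1 h with rfl | h
        exacts [Or.inr List.mem_cons_self, Or.inl h]
      · exact Or.inl (mem_of_mem_erase h)
    · exact Or.inr (List.mem_cons_of_mem _ h)

lemma mem_held_stepConfig {I : Inst ν} {c : Config ν I.P} {S : Superstep ν I.P}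
    (hS : ssValid I c S) {x : ν} (hx : x ∈ (stepConfig c S).held) :
    x ∈ c.B ∨ ∃ p, x ∈ afterComp c S p := by
  obtain ⟨-, -, hsave, hload, -⟩ := hS
  have of_mem_newB (h : x ∈ newB c S) : x ∈ c.B ∨ ∃ p, x ∈ afterComp c S p := by
    simp only [newB, mem_union, mem_biUnion, mem_univ, true_and, List.mem_toFinset] at h
    rcases h with h | ⟨p, h⟩
    exacts [Or.inl h, Or.inr ⟨p, hsave p x h⟩]
  rcases Config.mem_held.1 hx with h | ⟨p, h⟩
  · exact of_mem_newB h
  · simp only [stepConfig, afterLoad, mem_union, List.mem_toFinset] at h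
    rcases h with h | h
    exacts [Or.inr ⟨p, foldl_erase_subset _ _ h⟩, of_mem_newB (hload p x h)]

end General

section Cost

variable {ν : Type}

lemma ioCost_load_le_ssCost {I : Inst ν} (hω : ∀ v, 0 ≤ I.ω v) (hμ : ∀ v, 0 ≤ I.μ v)
    (hg : 0 ≤ I.g) (hL : 0 ≤ I.L) (S : Superstep ν I.P) (p : Fin I.P) :
    ioCost I (S.load p) ≤ ssCost I S := by
  have hcomp : 0 ≤ listCost I (S.comp p) := by
    refine List.sum_nonneg fun c hc => ?_
    obtain ⟨op, -, rfl⟩ := List.mem_map.1 hc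
    cases op <;> simp [opCost, hω, mul_nonneg (hμ _) hg]
  have hsave : 0 ≤ ioCost I (S.save p) := by
    refine List.sum_nonneg fun c hc => ?_
    obtain ⟨v, -, rfl⟩ := List.mem_map.1 hc
    exact mul_nonneg (hμ v) hg
  have h1 := le_ciSup (Finite.bddAbove_range fun q => listCost I (S.comp q)) p
  have h2 := le_ciSup (Finite.bddAbove_range fun q => ioCost I (S.save q)) p
  have h3 := le_ciSup (Finite.bddAbove_range fun q => ioCost I (S.load q)) p
  unfold ssCost
  linarith

lemma sum_ioCost_load_le_syncCost {I : Inst ν} (hω : ∀ v, 0 ≤ I.ω v) (hμ : ∀ v, 0 ≤ I.μ v)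
    (hg : 0 ≤ I.g) (hL : 0 ≤ I.L) (sched : Schedule ν I.P) (p : Fin I.P) :
    (sched.map fun S => ioCost I (S.load p)).sum ≤ syncCost I sched :=
  List.sum_le_sum fun S _ => ioCost_load_le_ssCost hω hμ hg hL S p

end Cost

section Zipper

variable {d m : ℕ}

def vIndex : ZNode d m → ℕ
  | .v i => i + 1
  | _ => 0

/-- `hParents d m (i + 1)` is the half of `H₁ ∪ H₂` feeding `v i`, of `vIndex` `i + 1`. -/
def hParents (d m j : ℕ) : Finset (ZNode d m) :=
  if Odd j then univ.image .h2 else univ.image .h1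

def potential (K : ℕ) (R : Finset (ZNode d m)) : ℕ :=
  (d - 1) * (K - 1) + #(R ∩ hParents d m (K + 1))

lemma card_hParents (j : ℕ) : #(hParents d m j) = d := by
  unfold hParents
  split <;>
    rw [card_image_of_injective _ (fun a b h => by injection h), card_univ, Fintype.card_fin]

lemma v_notMem_hParents (i : Fin m) (j : ℕ) : ZNode.v i ∉ hParents d m j := by
  unfold hParents; split <;> simp

lemma u_notMem_hParents (i : Fin m) (j : ℕ) : ZNode.u i ∉ hParents d m j := by
  unfold hParents; split <;> simp

lemma disjoint_hParents_succ (j : ℕ) : Disjoint (hParents d m j) (hParents d m (j + 1)) := by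
  unfold hParents
  rcases Nat.even_or_odd j with hj | hj
  · rw [if_neg (Nat.not_odd_iff_even.2 hj), if_pos hj.add_one]
    simp [disjoint_left]
  · rw [if_pos hj, if_neg (Nat.not_odd_iff_even.2 hj.add_one)]
    simp [disjoint_left]

lemma zEdge_of_mem_hParents {i : Fin m} {x : ZNode d m} (hx : x ∈ hParents d m (i + 1)) :
    zEdge d m x (.v i) := by
  unfold hParents at hx
  split at hx <;> obtain ⟨a, -, rfl⟩ := mem_image.1 hx
  · assumption
  · exact Nat.not_odd_iff_even.1 ‹_›

lemma potential_le_of_subset_union {K : ℕ} {R R' F : Finset (ZNode d m)} (h : R ⊆ R' ∪ F) :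
    potential K R ≤ potential K R' + #F := by
  have : #(R ∩ hParents d m (K + 1)) ≤ #(R' ∩ hParents d m (K + 1)) + #F := by
    refine (card_le_card fun x hx => ?_).trans (card_union_le _ _)
    rw [mem_inter] at hx
    rcases mem_union.1 (h hx.1) with h' | h'
    exacts [mem_union_left _ (mem_inter.2 ⟨h', hx.2⟩), mem_union_right _ h']
  unfold potential
  omega

lemma potential_insert_of_notMem {K : ℕ} {R : Finset (ZNode d m)} {x : ZNode d m}
    (hx : x ∉ hParents d m (K + 1)) : potential K (insert x R) = potential K R := by
  rw [potential, potential, insert_inter_of_notMem hx]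

lemma potential_succ_insert_v {K : ℕ} {R : Finset (ZNode d m)} {i : Fin m} (hi : (i : ℕ) = K)
    (hpar : hParents d m (K + 1) ⊆ R) (hcard : #(insert (ZNode.v i) R) ≤ d + 2) :
    potential (K + 1) (insert (ZNode.v i) R) ≤ potential K R := by
  set R' := insert (ZNode.v i) R
  set T := insert (ZNode.v i) (hParents d m (K + 1))
  have hT : #T = d + 1 := by
    rw [card_insert_of_notMem (v_notMem_hParents _ _), card_hParents]
  have hTR' : T ⊆ R' := insert_subset_insert _ hpar
  have hnext : #(R' ∩ hParents d m (K + 2)) ≤ 1 := by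
    have hsub : R' ∩ hParents d m (K + 2) ⊆ R' \ T := by
      intro x hx
      rw [mem_inter] at hx
      refine mem_sdiff.2 ⟨hx.1, fun hxT => ?_⟩
      rcases mem_insert.1 hxT with rfl | hxT
      · exact v_notMem_hParents _ _ hx.2
      · exact disjoint_left.1 (disjoint_hParents_succ (K + 1)) hxT hx.2
    have := card_le_card hsub
    rw [card_sdiff_of_subset hTR', hT] at this
    omega
  have hnext' : #(R' ∩ hParents d m (K + 2)) ≤ d :=
    (card_le_card inter_subset_right).trans (card_hParents _).le
  have hfull : #(R ∩ hParents d m (K + 1)) = d := by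
    rw [inter_eq_right.2 hpar, card_hParents]
  have hmul : (d - 1) * K ≤ (d - 1) * (K - 1) + (d - 1) := by
    rw [← Nat.mul_succ]; exact Nat.mul_le_mul_left _ (by omega)
  unfold potential
  rw [show K + 1 + 1 = K + 2 by rfl, Nat.add_sub_cancel]
  omega

lemma index_le_of_parents_mem {R : Finset (ZNode d m)} {i : Fin m} {K : ℕ}
    (hpar : ∀ u, zEdge d m u (.v i) → u ∈ R) (hK : R.sup vIndex ≤ K) : (i : ℕ) ≤ K := by
  rcases Nat.eq_zero_or_pos (i : ℕ) with h0 | hpos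
  · omega
  · have hprev : ZNode.v ⟨(i : ℕ) - 1, by omega⟩ ∈ R :=
      hpar _ (show (i : ℕ) = _ + 1 by simp; omega)
    have := (le_sup hprev).trans hK
    simp only [vIndex] at this
    omega

lemma exists_potential_insert_v {R : Finset (ZNode d m)} {i : Fin m} {K : ℕ}
    (hpar : ∀ u, zEdge d m u (.v i) → u ∈ R) (hcard : #(insert (ZNode.v i) R) ≤ d + 2)
    (hK : R.sup vIndex ≤ K) :
    ∃ K' ≥ K, (insert (ZNode.v i) R).sup vIndex ≤ K' ∧
      potential K' (insert (ZNode.v i) R) ≤ potential K R := by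
  have hiK := index_le_of_parents_mem hpar hK
  rcases hiK.lt_or_eq with hlt | heq
  · refine ⟨K, le_rfl, ?_, (potential_insert_of_notMem (v_notMem_hParents _ _)).le⟩
    rw [sup_insert]
    exact sup_le (show (i : ℕ) + 1 ≤ K by omega) hK
  · refine ⟨K + 1, K.le_succ, ?_, potential_succ_insert_v heq ?_ hcard⟩
    · rw [sup_insert]
      exact sup_le (show (i : ℕ) + 1 ≤ K + 1 by omega) (hK.trans K.le_succ)
    · intro x hx
      exact hpar x (zEdge_of_mem_hParents (heq ▸ hx))

variable {g L : ℝ}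

lemma card_le_of_memOK {R : Finset (ZNode d m)} (h : memOK (zipper d m ((d : ℝ) + 2) g L) R) :
    #R ≤ d + 2 := by
  have : (#R : ℝ) ≤ d + 2 := by simpa [memOK, zipper] using h
  exact_mod_cast this

lemma exists_potential_applyOp {R B : Finset (ZNode d m)} {op : Op (ZNode d m)} {K : ℕ}
    (hop : (∃ v, op = .compute v) ∨ (∃ v, op = .delete v))
    (hok : opOK (zipper d m ((d : ℝ) + 2) g L) R B op)
    (hmem : memOK (zipper d m ((d : ℝ) + 2) g L) (applyOp R B op).1) (hK : R.sup vIndex ≤ K) :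
    ∃ K' ≥ K, (applyOp R B op).1.sup vIndex ≤ K' ∧
      potential K' (applyOp R B op).1 ≤ potential K R := by
  rcases hop with ⟨w, rfl⟩ | ⟨w, rfl⟩
  · cases w with
    | h1 a => obtain ⟨u, hu⟩ := hok.1; cases u <;> exact hu.elim
    | h2 a => obtain ⟨u, hu⟩ := hok.1; cases u <;> exact hu.elim
    | u i =>
      refine ⟨K, le_rfl, ?_, (potential_insert_of_notMem (u_notMem_hParents _ _)).le⟩
      simpa [applyOp, vIndex] using hK
    | v i => exact exists_potential_insert_v hok.2 (card_le_of_memOK hmem) hK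
  · refine ⟨K, le_rfl, (sup_mono (erase_subset w R)).trans hK, ?_⟩
    simpa [applyOp] using potential_le_of_subset_union (K := K) (F := ∅)
      (by simpa using erase_subset w R)

lemma exists_potential_run {l : List (Op (ZNode d m))} (hl : compOnly l) {R B : Finset (ZNode d m)}
    (hv : seqValid (zipper d m ((d : ℝ) + 2) g L) R B l) {K : ℕ} (hK : R.sup vIndex ≤ K) :
    ∃ K' ≥ K, (run R B l).1.sup vIndex ≤ K' ∧
      potential K' (run R B l).1 ≤ potential K R := by
  induction l generalizing R B K with
  | nil => exact ⟨K, le_rfl, hK, le_rfl⟩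
  | cons op rest ih =>
    obtain ⟨hok, hmem, hrest⟩ := hv
    obtain ⟨K₁, hKK₁, hK₁, hpot₁⟩ :=
      exists_potential_applyOp (hl op List.mem_cons_self) hok hmem hK
    obtain ⟨K₂, hK₁K₂, hK₂, hpot₂⟩ :=
      ih (fun o ho => hl o (List.mem_cons_of_mem _ ho)) hrest hK₁
    exact ⟨K₂, hKK₁.trans hK₁K₂, hK₂, hpot₂.trans hpot₁⟩

lemma exists_potential_stepConfig {c : Config (ZNode d m) 2} {S : Superstep (ZNode d m) 2}
    (hS : ssValid (zipper d m ((d : ℝ) + 2) g L) c S)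
    (hv₁ : ∀ i, Op.compute (ZNode.v i) ∉ S.comp 1)
    {K : ℕ} (hK : c.held.sup vIndex ≤ K) :
    ∃ K', (stepConfig c S).held.sup vIndex ≤ K' ∧
      potential K' ((stepConfig c S).R 0) ≤ potential K (c.R 0) + (S.load 0).length := by
  rw [Finset.sup_le_iff] at hK
  have hK₀ : (c.R 0).sup vIndex ≤ K :=
    Finset.sup_le fun x hx => hK x (Config.mem_held.2 (Or.inr ⟨0, hx⟩))
  obtain ⟨K', hKK', hK', hpot⟩ :=
    exists_potential_run (hS.1 (0 : Fin 2)) (hS.2.1 (0 : Fin 2)) hK₀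
  refine ⟨K', Finset.sup_le fun x hx => ?_, ?_⟩
  · rcases mem_held_stepConfig hS hx with hB | ⟨p, hp⟩
    · exact (hK x (Config.mem_held.2 (Or.inl hB))).trans hKK'
    · have hcomp : ∀ q : Fin 2, x ∈ afterComp c S q → vIndex x ≤ K' := by
        intro q hq
        fin_cases q
        · exact (le_sup hq).trans hK'
        · rcases mem_run_of_compOnly (hS.1 (1 : Fin 2)) hq with h | h
          · exact (hK x (Config.mem_held.2 (Or.inr ⟨1, h⟩))).trans hKK'
          · cases x with
            | v i => exact absurd h (hv₁ i)
            | _ => exact Nat.zero_le _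
      exact hcomp p hp
  · calc potential K' ((stepConfig c S).R 0)
        ≤ potential K' (afterComp c S 0) + #(S.load 0).toFinset :=
          potential_le_of_subset_union (union_subset_union (foldl_erase_subset _ _) subset_rfl)
      _ ≤ potential K (c.R 0) + (S.load 0).length := add_le_add hpot (List.toFinset_card_le _)

lemma exists_potential_runSched (sched : Schedule (ZNode d m) 2) {c : Config (ZNode d m) 2}
    (hv : schedValidFrom (zipper d m ((d : ℝ) + 2) g L) c sched)
    (hv₁ : ∀ S ∈ sched, ∀ i, Op.compute (ZNode.v i) ∉ S.comp 1)
    {K : ℕ} (hK : c.held.sup vIndex ≤ K) :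
    ∃ K', (runSched c sched).held.sup vIndex ≤ K' ∧ potential K' ((runSched c sched).R 0) ≤
      potential K (c.R 0) + (sched.map fun S => (S.load 0).length).sum := by
  induction sched generalizing c K with
  | nil => exact ⟨K, hK, by simp [runSched]⟩
  | cons S rest ih =>
    obtain ⟨K₁, hK₁, hpot₁⟩ :=
      exists_potential_stepConfig hv.1 (hv₁ S List.mem_cons_self) hK
    obtain ⟨K₂, hK₂, hpot₂⟩ :=
      ih hv.2 (fun S' hS' => hv₁ S' (List.mem_cons_of_mem _ hS')) hK₁
    refine ⟨K₂, hK₂, hpot₂.trans ?_⟩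
    simp only [List.map_cons, List.sum_cons]
    exact (Nat.add_le_add_right hpot₁ _).trans_eq (Nat.add_assoc _ _ _)

lemma held_sup_vIndex_init {r : ℝ} (hd : 0 < d) {B₀ : Finset (ZNode d m)}
    (hB₀ : initB (zipper d m r g L) B₀) :
    (⟨fun _ => ∅, B₀⟩ : Config (ZNode d m) 2).held.sup vIndex = 0 := by
  refine Nat.eq_zero_of_le_zero (Finset.sup_le fun x hx => ?_)
  have hx : isSource (zipper d m r g L) x := (hB₀ x).1 (by simpa [Config.mem_held] using hx)
  cases x with
  | v i =>
    refine (hx ?_).elim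
    rcases Nat.even_or_odd ((i : ℕ) + 1) with h | h
    exacts [⟨.h1 ⟨0, hd⟩, h⟩, ⟨.h2 ⟨0, hd⟩, h⟩]
  | _ => exact le_rfl

lemma le_held_sup_vIndex {r : ℝ} (hm : 0 < m) {c : Config (ZNode d m) 2}
    (hsinks : ∀ v, isSink (zipper d m r g L) v → v ∈ c.B) : m ≤ c.held.sup vIndex := by
  let last : Fin m := ⟨m - 1, by omega⟩
  have hsink : isSink (zipper d m r g L) (.v last) := by
    rintro ⟨x, hx⟩
    cases x with
    | v j => exact absurd (show (j : ℕ) = m - 1 + 1 from hx) (by omega)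
    | _ => exact hx
  have := le_sup (f := vIndex) (Config.mem_held.2 (Or.inl (hsinks _ hsink)))
  simp only [vIndex, last] at this
  omega

lemma loads_mul_le_syncCost {r : ℝ} (hg : 0 ≤ g) (hL : 0 ≤ L) (sched : Schedule (ZNode d m) 2) :
    (((sched.map fun S => (S.load 0).length).sum : ℕ) : ℝ) * g ≤
      syncCost (zipper d m r g L) sched := by
  have hio (l : List (ZNode d m)) : ioCost (zipper d m r g L) l = l.length * g := by
    simp [ioCost, zipper]
  calc (((sched.map fun S => (S.load 0).length).sum : ℕ) : ℝ) * g
      = (sched.map fun S => ioCost (zipper d m r g L) (S.load 0)).sum := by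
        simp [hio, List.sum_map_mul_right, Function.comp_def]
    _ ≤ syncCost (zipper d m r g L) sched :=
      sum_ioCost_load_le_syncCost (I := zipper d m r g L)
        (fun _ => zero_le_one) (fun _ => zero_le_one) hg hL sched (0 : Fin 2)

end Zipper

/-- For `d, m ≥ 2`, `g, L ≥ 0`, on the zipper DAG `Z(d,m)` with
`P = 2` and `r = d+2`: every valid schedule computing every `v_i` on processor 1
contains at least `(m−1)(d−1)` LOAD transitions on processor 1, hence its
synchronous cost is at least `(m−1)(d−1)·g`. -/
theorem statement_1 (d m : ℕ) (hd : 2 ≤ d) (hm : 2 ≤ m) (g L : ℝ)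
    (hg : 0 ≤ g) (hL : 0 ≤ L)
    (sched : Schedule (ZNode d m) 2)
    (hval : Valid (zipper d m ((d : ℝ) + 2) g L) sched)
    (hproc : ∀ S ∈ sched, ∀ p : Fin 2, ∀ i : Fin m,
      Op.compute (ZNode.v i) ∈ S.comp p → p = 0) :
    (m - 1) * (d - 1) ≤ (sched.map (fun S => (S.load 0).length)).sum ∧
    (((m - 1) * (d - 1) : ℕ) : ℝ) * g ≤ syncCost (zipper d m ((d : ℝ) + 2) g L) sched := by
  obtain ⟨B₀, hB₀, hvalid, hsinks⟩ := hval
  obtain ⟨K, hK, hpot⟩ := exists_potential_runSched sched hvalid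
    (fun S hS i h => absurd (hproc S hS 1 i h) (by decide))
    (held_sup_vIndex_init (by omega) hB₀).le
  have hmK : m ≤ K := (le_held_sup_vIndex (by omega) hsinks).trans hK
  have hloads : (m - 1) * (d - 1) ≤ (sched.map (fun S => (S.load 0).length)).sum :=
    calc (m - 1) * (d - 1) ≤ (d - 1) * (K - 1) := by
          rw [Nat.mul_comm]; exact Nat.mul_le_mul_left _ (by omega)
      _ ≤ potential K ((runSched _ sched).R 0) := Nat.le_add_right _ _
      _ ≤ _ := hpot
      _ = _ := by simp [potential]
  refine ⟨hloads, le_trans ?_ (loads_mul_le_syncCost hg hL sched)⟩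
  exact mul_le_mul_of_nonneg_right (by exact_mod_cast hloads) hg

end MBSP
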